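/- arXiv:2208.05147 — 2 statements merged into one kernel-verified Lean document; each statement's English description precedes it below -/
import Mathlib

section
/- Consider the Game of Cycles on a path with n ≥ 1 edges, where the sink–source rule is ignored at the two end vertices and the winner is the player who makes the last legal move. If n is odd, Player 1 has a winning strategy; if n is even, Player 2 has a winning strategy. -/
/-- Legality of a position on a path with `n` edges indexed by `Fin n` (edge `i` joins
vertex `v_i` to `v_{i+1}`; `some true` = directed toward `v_{i+1}`, `some false` = toward
`v_i`, `none` = undirected).  The sink–source rule holds at internal vertices only (the two
end vertices are exempt): the vertex between consecutive edges may not have both incident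
edges directed into it, nor both directed out of it. -/
def PathLegal (n : ℕ) (pos : Fin n → Option Bool) : Prop :=
  ∀ i j : Fin n, j.val = i.val + 1 →
    ¬(pos i = some true ∧ pos j = some false) ∧
    ¬(pos i = some false ∧ pos j = some true)

/-- The player to move has a winning strategy: there is a legal move (directing an
undirected edge without creating a forbidden sink or source) that either immediately wins
(`done`) or leaves a position from which the opponent, now to move, has no winning strategy;
a player with no legal move loses (the opponent made the last legal move). -/
def Wins {E : Type} [Fintype E] [DecidableEq E]
    (legal done : (E → Option Bool) → Prop) (pos : E → Option Bool) : Prop :=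
  ∃ (e : E) (b : Bool) (_ : pos e = none),
    legal (Function.update pos e (some b)) ∧
    (done (Function.update pos e (some b)) ∨
      ¬ Wins legal done (Function.update pos e (some b)))
termination_by (Finset.univ.filter fun e => pos e = none).card
decreasing_by
  rename_i h
  apply Finset.card_lt_card
  rw [Finset.ssubset_def]
  constructor
  · intro x hx
    simp only [Finset.mem_filter, Finset.mem_univ, true_and] at *
    by_cases hx' : x = e
    · subst hx'; simp [Function.update_self] at hx
    · rwa [Function.update_of_ne hx'] at hx
  · intro hsub
    have := hsub (Finset.mem_filter.mpr ⟨Finset.mem_univ e, h⟩)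
    simp [Function.update_self] at this

/-- Index reversal on the edges of the path. -/
def rv (n : ℕ) (i : Fin n) : Fin n := ⟨n - 1 - i.val, by omega⟩

lemma rv_rv (n : ℕ) (i : Fin n) : rv n (rv n i) = i := by
  have := i.isLt
  simp only [rv, Fin.ext_iff]
  omega

lemma rv_inj {n : ℕ} {i j : Fin n} (h : rv n i = rv n j) : i = j := by
  have hi := i.isLt; have hj := j.isLt
  simp only [rv, Fin.ext_iff] at h ⊢
  omega

/-- Value of the doubly-updated (mirrored) position. -/
lemma upd2_val {n : ℕ} (pos : Fin n → Option Bool) (e : Fin n) (b : Bool) (x : Fin n) :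
    Function.update (Function.update pos e (some b)) (rv n e) (some b) x =
      if x = rv n e ∨ x = e then some b else pos x := by
  by_cases hx : x = rv n e
  · subst hx; simp
  · by_cases hx' : x = e
    · subst hx'
      rw [Function.update_of_ne hx, Function.update_self, if_pos (Or.inr rfl)]
    · rw [Function.update_of_ne hx, Function.update_of_ne hx', if_neg (by tauto)]

lemma rv_cond {n : ℕ} (e i : Fin n) :
    (rv n i = rv n e ∨ rv n i = e) ↔ (i = rv n e ∨ i = e) := by
  constructor
  · rintro (h | h)
    · exact Or.inr (rv_inj h)
    · refine Or.inl ?_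
      have := congrArg (rv n) h
      rwa [rv_rv] at this
  · rintro (h | h)
    · subst h; exact Or.inr (rv_rv n e)
    · subst h; exact Or.inl rfl

/-- The doubly-updated position is symmetric if the base position is. -/
lemma upd2_symm {n : ℕ} (pos : Fin n → Option Bool)
    (hs : ∀ i, pos (rv n i) = pos i) (e : Fin n) (b : Bool) (i : Fin n) :
    Function.update (Function.update pos e (some b)) (rv n e) (some b) (rv n i) =
      Function.update (Function.update pos e (some b)) (rv n e) (some b) i := by
  rw [upd2_val, upd2_val]
  by_cases h : i = rv n e ∨ i = e
  · rw [if_pos ((rv_cond e i).mpr h), if_pos h]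
  · rw [if_neg (fun hh => h ((rv_cond e i).mp hh)), if_neg h]
    exact hs i

/-- Mirror legality: if updating a symmetric position at `e` is legal, then also
updating at the mirror edge with the same direction is legal. -/
lemma mirror_legal {n : ℕ} (pos : Fin n → Option Bool)
    (hs : ∀ i, pos (rv n i) = pos i) (e : Fin n) (b : Bool)
    (hne : rv n e ≠ e)
    (h1 : PathLegal n (Function.update pos e (some b))) :
    PathLegal n (Function.update (Function.update pos e (some b)) (rv n e) (some b)) := by
  intro i j hj
  have hij : i ≠ j := by intro h; rw [h] at hj; omega
  have hie := i.isLt; have hje := j.isLt; have hee := e.isLt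
  rw [upd2_val, upd2_val]
  by_cases hi : i = rv n e
  · have hjR : j ≠ rv n e := by rw [← hi]; exact fun h => hij h.symm
    rw [if_pos (Or.inl hi)]
    by_cases hjE : j = e
    · rw [if_pos (Or.inr hjE)]
      constructor <;> rintro ⟨h1', h2'⟩ <;> simp_all
    · rw [if_neg (by tauto)]
      -- the mirrored constraint: pair (rv j, e) in the singly-updated position
      have hiv : i.val = n - 1 - e.val := by rw [hi]; rfl
      have hrjv : (rv n j).val = n - 1 - j.val := rfl
      have he1 : 1 ≤ e.val := by omega
      have hadj : e.val = (rv n j).val + 1 := by omega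
      have hrje : rv n j ≠ e := by
        intro h; have := congrArg Fin.val h; omega
      have hthis := h1 (rv n j) e hadj
      rw [Function.update_of_ne hrje, Function.update_self, hs j] at hthis
      constructor
      · rintro ⟨hb, hpj⟩; exact hthis.2 ⟨hpj, hb⟩
      · rintro ⟨hb, hpj⟩; exact hthis.1 ⟨hpj, hb⟩
  · by_cases hjR : j = rv n e
    · rw [if_pos (Or.inl hjR)]
      by_cases hiE : i = e
      · rw [if_pos (Or.inr hiE)]
        constructor <;> rintro ⟨h1', h2'⟩ <;> simp_all
      · rw [if_neg (by tauto)]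
        have hjv : j.val = n - 1 - e.val := by rw [hjR]; rfl
        have hriv : (rv n i).val = n - 1 - i.val := rfl
        have he2 : e.val + 1 ≤ n - 1 := by omega
        have hadj : (rv n i).val = e.val + 1 := by omega
        have hrie : rv n i ≠ e := by
          intro h; have := congrArg Fin.val h; omega
        have hthis := h1 e (rv n i) hadj
        rw [Function.update_of_ne hrie, Function.update_self, hs i] at hthis
        constructor
        · rintro ⟨hpi, hb⟩; exact hthis.2 ⟨hb, hpi⟩
        · rintro ⟨hpi, hb⟩; exact hthis.1 ⟨hb, hpi⟩
    · -- neither endpoint is the mirror edge: same as singly-updated position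
      have hthis := h1 i j hj
      by_cases hiE : i = e
      · rw [hiE, Function.update_self] at hthis
        rw [if_pos (Or.inr hiE)]
        have hjE : j ≠ e := by rw [← hiE]; exact fun h => hij h.symm
        rw [Function.update_of_ne hjE] at hthis
        rw [if_neg (by tauto)]
        exact hthis
      · rw [Function.update_of_ne hiE] at hthis
        rw [if_neg (by tauto)]
        by_cases hjE : j = e
        · rw [hjE, Function.update_self] at hthis
          rw [if_pos (Or.inr hjE)]
          exact hthis
        · rw [Function.update_of_ne hjE] at hthis
          rw [if_neg (by tauto)]
          exact hthis

/-- Key lemma: from a symmetric position in which every undirected edge differs from its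
mirror edge, the player to move loses (mirroring strategy). -/
lemma notWins_symm {n : ℕ} (k : ℕ) (pos : Fin n → Option Bool)
    (hk : (Finset.univ.filter fun e => pos e = none).card = k)
    (hs : ∀ i, pos (rv n i) = pos i)
    (hc : ∀ i, pos i = none → rv n i ≠ i) :
    ¬ Wins (PathLegal n) (fun _ => False) pos := by
  induction k using Nat.strong_induction_on generalizing pos with
  | _ k IH =>
    intro hw
    rw [Wins] at hw
    obtain ⟨e, b, he, hleg, hor⟩ := hw
    rcases hor with h | h
    · exact h
    apply h
    rw [Wins]
    have hne : rv n e ≠ e := hc e he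
    have he' : Function.update pos e (some b) (rv n e) = none := by
      rw [Function.update_of_ne hne, hs e]; exact he
    refine ⟨rv n e, b, he', mirror_legal pos hs e b hne hleg, Or.inr ?_⟩
    set pos2 := Function.update (Function.update pos e (some b)) (rv n e) (some b) with hpos2
    have hval : ∀ x : Fin n, pos2 x = if x = rv n e ∨ x = e then some b else pos x :=
      fun x => upd2_val pos e b x
    have hs2 : ∀ i, pos2 (rv n i) = pos2 i := fun i => upd2_symm pos hs e b i
    have hc2 : ∀ i, pos2 i = none → rv n i ≠ i := by
      intro i hnone
      apply hc
      rw [hval] at hnone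
      by_cases hi : i = rv n e ∨ i = e
      · rw [if_pos hi] at hnone; exact absurd hnone (by simp)
      · rwa [if_neg hi] at hnone
    have hsub : (Finset.univ.filter fun x => pos2 x = none) ⊂
        (Finset.univ.filter fun x => pos x = none) := by
      rw [Finset.ssubset_def]
      constructor
      · intro x hx
        simp only [Finset.mem_filter, Finset.mem_univ, true_and] at *
        rw [hval] at hx
        by_cases hx' : x = rv n e ∨ x = e
        · rw [if_pos hx'] at hx; exact absurd hx (by simp)
        · rwa [if_neg hx'] at hx
      · intro hsub'
        have hmem := hsub' (Finset.mem_filter.mpr ⟨Finset.mem_univ e, he⟩)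
        simp only [Finset.mem_filter, Finset.mem_univ, true_and] at hmem
        rw [hval, if_pos (Or.inr rfl)] at hmem
        exact absurd hmem (by simp)
    exact IH _ (hk ▸ Finset.card_lt_card hsub) pos2 rfl hs2 hc2

/-- Game of Cycles on a path with `n ≥ 1` edges (end vertices exempt from the sink–source
rule; there are no cycles, so the winner is whoever makes the last legal move, encoded by
taking the immediate-win condition to be `False`).  Starting from the empty position,
Player 1 has a winning strategy if `n` is odd, and Player 2 has a winning strategy
(equivalently, the first player to move does not) if `n` is even. -/
theorem path_game_winner (n : ℕ) (hn : 1 ≤ n) :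
    (Odd n → Wins (PathLegal n) (fun _ => False) (fun _ => none)) ∧
    (Even n → ¬ Wins (PathLegal n) (fun _ => False) (fun _ => none)) := by
  constructor
  · intro hodd
    obtain ⟨m, hm⟩ := hodd
    rw [Wins]
    set c : Fin n := ⟨m, by omega⟩ with hc
    have hcv : c.val = m := rfl
    refine ⟨c, true, rfl, ?_, Or.inr ?_⟩
    · -- legality of the single-move position
      intro i j hj
      constructor
      · rintro ⟨h1, h2⟩
        by_cases hje : j = c
        · rw [hje, Function.update_self] at h2; exact absurd h2 (by simp)
        · rw [Function.update_of_ne hje] at h2; exact absurd h2 (by simp)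
      · rintro ⟨h1, h2⟩
        by_cases hie : i = c
        · rw [hie, Function.update_self] at h1; exact absurd h1 (by simp)
        · rw [Function.update_of_ne hie] at h1; exact absurd h1 (by simp)
    · -- mirrored position: apply the key lemma
      set pos1 := Function.update (fun _ : Fin n => (none : Option Bool)) c (some true)
        with hp1
      have hval : ∀ x : Fin n, pos1 x = if x = c then some true else none := by
        intro x
        by_cases hx : x = c
        · simp [hp1, hx]
        · simp [hp1, Function.update_of_ne hx, hx]
      have hrc : rv n c = c := by
        simp only [rv, Fin.ext_iff, hcv]
        omega
      apply notWins_symm ((Finset.univ.filter fun e => pos1 e = none).card) pos1 rfl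
      · intro i
        rw [hval, hval]
        by_cases hi : i = c
        · rw [if_pos (by rw [hi, hrc]), if_pos hi]
        · rw [if_neg ?_, if_neg hi]
          intro h
          apply hi
          have := congrArg (rv n) h
          rwa [rv_rv, hrc] at this
      · intro i hnone hri
        rw [hval] at hnone
        by_cases hi : i = c
        · rw [if_pos hi] at hnone; exact absurd hnone (by simp)
        · have hiv := i.isLt
          have hv : (rv n i).val = i.val := congrArg Fin.val hri
          simp only [rv] at hv
          have hvm : i.val = m := by omega
          exact hi (Fin.ext (by rw [hvm, hcv]))
  · intro heven
    obtain ⟨m, hm⟩ := heven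
    apply notWins_symm ((Finset.univ.filter fun e => (none : Option Bool) = none).card)
      (fun _ => none) rfl (fun _ => rfl)
    intro i _ hri
    have hiv := i.isLt
    have hv : (rv n i).val = i.val := congrArg Fin.val hri
    simp only [rv] at hv
    omega
end

section
/- In the Game of Cycles played on a path of n edges where the sink–source rule holds at internal vertices only, if n ≥ 5 then the player who is first to direct a primary edge (an edge incident to an end vertex) or a secondary edge (an edge adjacent to a primary edge) loses, assuming the other player plays optimally: the opponent can respond on the opposite primary edge choosing its direction to fix the parity of unmarkable edges in their favor. -/
def U {n : ℕ} (pos : Fin n → Option Bool) : ℕ :=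
  (Finset.univ.filter fun e => pos e = none).card

lemma U_update {n : ℕ} {pos : Fin n → Option Bool} {e : Fin n} (h : pos e = none) (c : Bool) :
    U (Function.update pos e (some c)) + 1 = U pos := by
  unfold U
  have hset : (Finset.univ.filter fun x => Function.update pos e (some c) x = none)
      = (Finset.univ.filter fun x => pos x = none).erase e := by
    ext x
    simp only [Finset.mem_filter, Finset.mem_univ, true_and, Finset.mem_erase]
    constructor
    · intro hx
      by_cases hx' : x = e
      · subst hx'; simp [Function.update_self] at hx
      · rw [Function.update_of_ne hx'] at hx; exact ⟨hx', hx⟩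
    · rintro ⟨hne, hx⟩; rwa [Function.update_of_ne hne]
  rw [hset, Finset.card_erase_of_mem (by simp [h])]
  have hpos : 0 < (Finset.univ.filter fun x => pos x = none).card :=
    Finset.card_pos.2 ⟨e, by simp [h]⟩
  omega

lemma PathLegal.adj {n : ℕ} {pos : Fin n → Option Bool} (h : PathLegal n pos)
    {i j : Fin n} (hij : j.val = i.val + 1) {c d : Bool}
    (hc : pos i = some c) (hd : pos j = some d) : c = d := by
  obtain ⟨h1, h2⟩ := h i j hij
  cases c <;> cases d <;> simp_all

lemma legal_update {n : ℕ} {pos : Fin n → Option Bool} (h : PathLegal n pos) (e : Fin n) (c : Bool)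
    (hLn : ∀ j : Fin n, e.val = j.val + 1 → pos j = none ∨ pos j = some c)
    (hRn : ∀ j : Fin n, j.val = e.val + 1 → pos j = none ∨ pos j = some c) :
    PathLegal n (Function.update pos e (some c)) := by
  intro i j hij
  by_cases hi : i = e
  · subst hi
    have hj : j ≠ i := by intro h'; subst h'; omega
    rw [Function.update_self, Function.update_of_ne hj]
    rcases hRn j hij with h' | h' <;> rw [h'] <;> cases c <;> simp
  · rw [Function.update_of_ne hi]
    by_cases hj : j = e
    · subst hj
      rw [Function.update_self]
      rcases hLn i hij with h' | h' <;> rw [h'] <;> cases c <;> simp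
    · rw [Function.update_of_ne hj]; exact h i j hij

def SigAt {n : ℕ} (pos : Fin n → Option Bool) (p s : Fin n) (a : Bool) : Prop :=
  pos p = some a ∨ (pos p = none ∧ pos s = some a)

lemma sig_update {n : ℕ} {pos : Fin n → Option Bool} {p s : Fin n}
    (hadj : s.val = p.val + 1 ∨ p.val = s.val + 1) {a : Bool}
    (hs : SigAt pos p s a) {e : Fin n} (he : pos e = none) (c : Bool)
    (hleg : PathLegal n (Function.update pos e (some c))) :
    SigAt (Function.update pos e (some c)) p s a := by
  rcases hs with hs | ⟨hp, hsv⟩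
  · left
    have hne : p ≠ e := by intro h'; subst h'; rw [he] at hs; cases hs
    rwa [Function.update_of_ne hne]
  · have hse : s ≠ e := by intro h'; subst h'; rw [he] at hsv; cases hsv
    by_cases hpe : p = e
    · subst hpe
      left
      rw [Function.update_self]
      have hsval : Function.update pos p (some c) s = some a := by
        rwa [Function.update_of_ne hse]
      have hpval : Function.update pos p (some c) p = some c := Function.update_self _ _ _
      rcases hadj with h' | h'
      · have := hleg.adj h' hpval hsval; rw [this]
      · have := hleg.adj h' hsval hpval; rw [← this]
    · right
      rw [Function.update_of_ne hpe, Function.update_of_ne hse]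
      exact ⟨hp, hsv⟩


def qext (n : ℕ) (pos : Fin n → Option Bool) : ℕ → Option Bool :=
  fun i => if h : i < n then pos ⟨i, h⟩ else none

def Ncount (n : ℕ) (pos : Fin n → Option Bool) (i : ℕ) : ℕ :=
  ((Finset.range i).filter fun j => qext n pos j = none).card

lemma Ncount_succ (n : ℕ) (pos : Fin n → Option Bool) (i : ℕ) :
    Ncount n pos (i+1) = Ncount n pos i + (if qext n pos i = none then 1 else 0) := by
  unfold Ncount
  rw [Finset.range_add_one, Finset.filter_insert]
  by_cases h : qext n pos i = none
  · rw [if_pos h, Finset.card_insert_of_notMem (by simp), if_pos h]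
  · rw [if_neg h, if_neg h]; omega

lemma terminal_parity {n : ℕ} (hn : 2 ≤ n) {pos : Fin n → Option Bool} (hL : PathLegal n pos)
    (hterm : ∀ (e : Fin n) (c : Bool), pos e = none →
      ¬ PathLegal n (Function.update pos e (some c)))
    {a b : Bool}
    (hsa : SigAt pos ⟨0, by omega⟩ ⟨1, by omega⟩ a)
    (hsb : SigAt pos ⟨n-1, by omega⟩ ⟨n-2, by omega⟩ b) :
    U pos % 2 = if a = b then 0 else 1 := by
  have hplay : ∀ (e : Fin n) (c : Bool), pos e = none →
      (∀ j : Fin n, e.val = j.val + 1 → pos j = none ∨ pos j = some c) →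
      (∀ j : Fin n, j.val = e.val + 1 → pos j = none ∨ pos j = some c) → False := by
    intro e c he h1 h2
    exact hterm e c he (legal_update hL e c h1 h2)
  -- endpoints are directed
  have h0 : pos ⟨0, by omega⟩ = some a := by
    rcases hsa with h | ⟨h, _⟩
    · exact h
    · exfalso
      rcases h1 : pos ⟨1, by omega⟩ with _ | d
      · exact hplay ⟨0, by omega⟩ true h
          (fun j hj => by exfalso; have hj' : (0:ℕ) = (j:ℕ) + 1 := hj; omega)
          (fun j hj => by
            have : j = ⟨1, by omega⟩ := Fin.ext (by simpa using hj)
            rw [this, h1]; exact Or.inl rfl)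
      · exact hplay ⟨0, by omega⟩ d h
          (fun j hj => by exfalso; have hj' : (0:ℕ) = (j:ℕ) + 1 := hj; omega)
          (fun j hj => by
            have : j = ⟨1, by omega⟩ := Fin.ext (by simpa using hj)
            rw [this, h1]; exact Or.inr rfl)
  have hlast : pos ⟨n-1, by omega⟩ = some b := by
    rcases hsb with h | ⟨h, _⟩
    · exact h
    · exfalso
      rcases h1 : pos ⟨n-2, by omega⟩ with _ | d
      · exact hplay ⟨n-1, by omega⟩ true h
          (fun j hj => by
            have hj' : n - 1 = (j:ℕ) + 1 := hj
            have : j = ⟨n-2, by omega⟩ := Fin.ext (by simp; omega)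
            rw [this, h1]; exact Or.inl rfl)
          (fun j hj => by
            exfalso
            have h2 := j.isLt
            have hj' : (j : ℕ) = n - 1 + 1 := hj
            omega)
      · exact hplay ⟨n-1, by omega⟩ d h
          (fun j hj => by
            have hj' : n - 1 = (j:ℕ) + 1 := hj
            have : j = ⟨n-2, by omega⟩ := Fin.ext (by simp; omega)
            rw [this, h1]; exact Or.inr rfl)
          (fun j hj => by
            exfalso
            have h2 := j.isLt
            have hj' : (j : ℕ) = n - 1 + 1 := hj
            omega)
  have hqval : ∀ (i : ℕ) (h : i < n), qext n pos i = pos ⟨i, h⟩ := fun i h => dif_pos h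
  have hq0 : qext n pos 0 = some a := by rw [hqval 0 (by omega)]; exact h0
  have scan : ∀ i, i < n → ∀ c : Bool, qext n pos i = some c →
      Ncount n pos i % 2 = if c = a then 0 else 1 := by
    intro i
    induction i using Nat.strong_induction_on with
    | _ i IH =>
      intro hi c hc
      match i with
      | 0 =>
        rw [hq0] at hc
        simp only [Option.some.injEq] at hc
        subst hc
        simp [Ncount]
      | Nat.succ k =>
        rcases hqk : qext n pos k with _ | d
        · have hk0 : k ≠ 0 := by
            intro h'; subst h'; rw [hq0] at hqk; cases hqk
          obtain ⟨m, rfl⟩ : ∃ m, k = m + 1 := ⟨k - 1, by omega⟩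
          have hkn : m + 1 < n := by omega
          have hposk : pos ⟨m+1, hkn⟩ = none := by rw [← hqval _ hkn]; exact hqk
          have hqm : qext n pos m = some (!c) := by
            rcases hqm' : qext n pos m with _ | d
            · exfalso
              apply hplay ⟨m+1, hkn⟩ c hposk
              · intro j hj
                have hj' : m + 1 = (j:ℕ) + 1 := hj
                have hjm : j = ⟨m, by omega⟩ := Fin.ext (by simp; omega)
                left; rw [hjm, ← hqval m (by omega)]; exact hqm'
              · intro j hj
                have hj' : (j:ℕ) = m + 1 + 1 := hj
                have hjs : j = ⟨m+2, hi⟩ := Fin.ext (by simp; omega)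
                right; rw [hjs, ← hqval _ hi]; exact hc
            · by_cases hdc : d = c
              · exfalso
                subst hdc
                apply hplay ⟨m+1, hkn⟩ d hposk
                · intro j hj
                  have hj' : m + 1 = (j:ℕ) + 1 := hj
                  have hjm : j = ⟨m, by omega⟩ := Fin.ext (by simp; omega)
                  right; rw [hjm, ← hqval m (by omega)]; exact hqm'
                · intro j hj
                  have hj' : (j:ℕ) = m + 1 + 1 := hj
                  have hjs : j = ⟨m+2, hi⟩ := Fin.ext (by simp; omega)
                  right; rw [hjs, ← hqval _ hi]; exact hc
              · have hd : d = !c := by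
                  cases c <;> cases d <;> first | rfl | exact absurd rfl hdc
                subst hd
                first
                | exact hqm'
                | rfl
          have hNi : Ncount n pos (m+2) = Ncount n pos m + 1 := by
            rw [Ncount_succ, Ncount_succ, hqk, hqm]
            simp
          have hIH := IH m (by omega) (by omega) (!c) hqm
          rw [hNi]
          by_cases hca : c = a
          · subst hca
            rw [if_pos rfl]
            rw [if_neg (by simp)] at hIH
            omega
          · rw [if_neg hca]
            rw [if_pos (by cases c <;> cases a <;> first | rfl | exact absurd rfl hca)] at hIH
            omega
        · have hkn : k < n := by omega
          have hdc : d = c := by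
            apply hL.adj (i := ⟨k, hkn⟩) (j := ⟨k+1, hi⟩) rfl
            · rw [← hqval k hkn]; exact hqk
            · rw [← hqval _ hi]; exact hc
          have hNi : Ncount n pos (k+1) = Ncount n pos k := by
            rw [Ncount_succ, hqk]; simp
          rw [hNi]
          exact IH k (by omega) (by omega) c (by rw [hqk, hdc])
  have hUN : U pos = Ncount n pos n := by
    have hNn' : Ncount n pos n = ∑ j ∈ Finset.range n, (if qext n pos j = none then 1 else 0) := by
      unfold Ncount; exact Finset.card_filter _ _
    rw [hNn']
    unfold U
    rw [Finset.card_filter]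
    rw [← Fin.sum_univ_eq_sum_range (fun j => if qext n pos j = none then 1 else 0) n]
    apply Finset.sum_congr rfl
    intro x _
    have hx : qext n pos x.val = pos x := hqval x.val x.isLt
    rw [hx]
  have hNn : Ncount n pos n = Ncount n pos (n-1) := by
    obtain ⟨m, hm⟩ : ∃ m, n = m + 1 := ⟨n - 1, by omega⟩
    subst hm
    rw [Ncount_succ]
    have hqm : qext (m+1) pos m = some b := by
      rw [hqval m (by omega)]
      convert hlast using 2
      exact Fin.ext (by simp)
    rw [hqm]
    simp
  have hqb : qext n pos (n-1) = some b := by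
    rw [hqval (n-1) (by omega)]; exact hlast
  have hfin := scan (n-1) (by omega) b hqb
  rw [hUN, hNn, hfin]
  cases a <;> cases b <;> simp

lemma key {n : ℕ} (hn : 2 ≤ n) (k : ℕ) :
    ∀ (pos : Fin n → Option Bool), U pos = k → PathLegal n pos →
    ∀ a b : Bool, SigAt pos ⟨0, by omega⟩ ⟨1, by omega⟩ a →
      SigAt pos ⟨n-1, by omega⟩ ⟨n-2, by omega⟩ b →
    (Wins (PathLegal n) (fun _ => False) pos ↔
      (k + if a = b then 0 else 1) % 2 = 1) := by
  induction k using Nat.strong_induction_on with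
  | _ k IH =>
    intro pos hk hL a b hsa hsb
    rw [Wins]
    constructor
    · rintro ⟨e, c, he, hleg, hor⟩
      have hnw : ¬ Wins (PathLegal n) (fun _ => False) (Function.update pos e (some c)) := by
        rcases hor with hdone | h
        · exact absurd hdone (by simp)
        · exact h
      have hU' := U_update he c
      have hsa' := sig_update (Or.inl rfl) hsa he c hleg
      have hsb' := sig_update (Or.inr (show n-1 = n-2+1 by omega)) hsb he c hleg
      have hiff := IH (k-1) (by omega) _ (by omega) hleg a b hsa' hsb'
      have hnp : ¬ ((k - 1 + if a = b then 0 else 1) % 2 = 1) :=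
        fun hp => hnw (hiff.mpr hp)
      by_cases hab : a = b <;> simp only [if_pos, if_neg, hab] at hnp ⊢ <;> simp at hnp ⊢ <;> omega
    · intro hp
      by_cases hex : ∃ (e : Fin n) (c : Bool), pos e = none ∧
          PathLegal n (Function.update pos e (some c))
      · obtain ⟨e, c, he, hleg⟩ := hex
        refine ⟨e, c, he, hleg, Or.inr ?_⟩
        have hU' := U_update he c
        have hsa' := sig_update (Or.inl rfl) hsa he c hleg
        have hsb' := sig_update (Or.inr (show n-1 = n-2+1 by omega)) hsb he c hleg
        have hiff := IH (k-1) (by omega) _ (by omega) hleg a b hsa' hsb'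
        intro hw
        have hq := hiff.mp hw
        by_cases hab : a = b <;> simp only [hab] at hp hq <;> simp at hp hq <;> omega
      · exfalso
        have hterm : ∀ (e : Fin n) (c : Bool), pos e = none →
            ¬ PathLegal n (Function.update pos e (some c)) :=
          fun e c he hleg => hex ⟨e, c, he, hleg⟩
        have htp := terminal_parity hn hL hterm hsa hsb
        rw [hk] at htp
        by_cases hab : a = b <;> simp only [hab] at hp htp <;> simp at hp htp <;> omega

lemma lt5_0 {n : ℕ} (hn : 5 ≤ n) : 0 < n := by omega
lemma lt5_1 {n : ℕ} (hn : 5 ≤ n) : 1 < n := by omega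
lemma lt5_2 {n : ℕ} (hn : 5 ≤ n) : n - 2 < n := by omega
lemma lt5_3 {n : ℕ} (hn : 5 ≤ n) : n - 1 < n := by omega

lemma win_left {n : ℕ} (hn : 5 ≤ n) {pos : Fin n → Option Bool} (hL : PathLegal n pos)
    {a : Bool} (hsa : SigAt pos ⟨0, lt5_0 hn⟩ ⟨1, lt5_1 hn⟩ a)
    (h2 : pos ⟨n-2, lt5_2 hn⟩ = none) (h3 : pos ⟨n-1, lt5_3 hn⟩ = none) :
    Wins (PathLegal n) (fun _ => False) pos := by
  obtain ⟨c, hcp⟩ : ∃ c : Bool, ((U pos - 1) + if a = c then 0 else 1) % 2 = 0 := by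
    by_cases he : (U pos - 1) % 2 = 0
    · exact ⟨a, by simp [he]⟩
    · exact ⟨!a, by simp; omega⟩
  have hleg : PathLegal n (Function.update pos ⟨n-1, by omega⟩ (some c)) := by
    apply legal_update hL
    · intro j hj
      have hj' : n - 1 = (j:ℕ) + 1 := hj
      have hje : j = ⟨n-2, by omega⟩ := Fin.ext (by simp; omega)
      rw [hje, h2]; exact Or.inl rfl
    · intro j hj
      exfalso
      have h4 := j.isLt
      have hj' : (j:ℕ) = n - 1 + 1 := hj
      omega
  have hU' := U_update h3 c
  have hsa' := sig_update (Or.inl rfl) hsa h3 c hleg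
  have hsb' : SigAt (Function.update pos ⟨n-1, by omega⟩ (some c))
      ⟨n-1, by omega⟩ ⟨n-2, by omega⟩ c := Or.inl (Function.update_self _ _ _)
  have hiff := key (show 2 ≤ n by omega) (U pos - 1) _ (by omega) hleg a c hsa' hsb'
  rw [Wins]
  refine ⟨⟨n-1, by omega⟩, c, h3, hleg, Or.inr ?_⟩
  intro hw
  have hp := hiff.mp hw
  rw [hcp] at hp
  simp at hp

lemma win_right {n : ℕ} (hn : 5 ≤ n) {pos : Fin n → Option Bool} (hL : PathLegal n pos)
    {b : Bool} (hsb : SigAt pos ⟨n-1, lt5_3 hn⟩ ⟨n-2, lt5_2 hn⟩ b)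
    (h0 : pos ⟨0, lt5_0 hn⟩ = none) (h1 : pos ⟨1, lt5_1 hn⟩ = none) :
    Wins (PathLegal n) (fun _ => False) pos := by
  obtain ⟨c, hcp⟩ : ∃ c : Bool, ((U pos - 1) + if c = b then 0 else 1) % 2 = 0 := by
    by_cases he : (U pos - 1) % 2 = 0
    · exact ⟨b, by simp [he]⟩
    · exact ⟨!b, by simp; omega⟩
  have hleg : PathLegal n (Function.update pos ⟨0, by omega⟩ (some c)) := by
    apply legal_update hL
    · intro j hj
      exfalso
      have hj' : (0:ℕ) = (j:ℕ) + 1 := hj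
      omega
    · intro j hj
      have hj' : (j:ℕ) = 0 + 1 := hj
      have hje : j = ⟨1, by omega⟩ := Fin.ext (by simp; omega)
      rw [hje, h1]; exact Or.inl rfl
  have hU' := U_update h0 c
  have hsb' := sig_update (Or.inr (show n-1 = n-2+1 by omega)) hsb h0 c hleg
  have hsa' : SigAt (Function.update pos ⟨0, by omega⟩ (some c))
      ⟨0, by omega⟩ ⟨1, by omega⟩ c := Or.inl (Function.update_self _ _ _)
  have hiff := key (show 2 ≤ n by omega) (U pos - 1) _ (by omega) hleg c b hsa' hsb'
  rw [Wins]
  refine ⟨⟨0, by omega⟩, c, h0, hleg, Or.inr ?_⟩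
  intro hw
  have hp := hiff.mp hw
  rw [hcp] at hp
  simp at hp

/-- On a path with `n ≥ 5` edges (end vertices exempt from the sink–source rule, last legal
move wins), the primary edges are `e_1, e_n` (indices `0` and `n-1`) and the secondary edges
are `e_2, e_{n-1}` (indices `1` and `n-2`).  The player who first directs a primary or
secondary edge loses: in any legal position in which exactly one of these four edges is
directed (that move having just been made), the other player — now to move — has a winning
strategy, obtained by answering on the opposite primary edge with the direction that fixes
the parity of unmarkable edges in their favour. -/
theorem path_primary_secondary_loses (n : ℕ) (hn : 5 ≤ n)
    (pos : Fin n → Option Bool) (hlegal : PathLegal n pos)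
    (hone : ((({⟨0, by omega⟩, ⟨1, by omega⟩, ⟨n - 2, by omega⟩, ⟨n - 1, by omega⟩} :
        Finset (Fin n)).filter fun e => pos e ≠ none).card = 1)) :
    Wins (PathLegal n) (fun _ => False) pos := by
  obtain ⟨x, hx⟩ := Finset.card_eq_one.mp hone
  set S : Finset (Fin n) :=
    {⟨0, by omega⟩, ⟨1, by omega⟩, ⟨n - 2, by omega⟩, ⟨n - 1, by omega⟩} with hSdef
  have hxf : x ∈ S.filter fun e => pos e ≠ none := by
    rw [hx]; exact Finset.mem_singleton_self x
  obtain ⟨hxS, hxne⟩ := Finset.mem_filter.mp hxf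
  have hothers : ∀ e ∈ S, e ≠ x → pos e = none := by
    intro e heS hene
    by_contra hne
    have hmem : e ∈ S.filter fun e => pos e ≠ none := Finset.mem_filter.mpr ⟨heS, hne⟩
    rw [hx] at hmem
    exact hene (Finset.mem_singleton.mp hmem)
  have hm0 : (⟨0, by omega⟩ : Fin n) ∈ S := Finset.mem_insert_self _ _
  have hm1 : (⟨1, by omega⟩ : Fin n) ∈ S :=
    Finset.mem_insert_of_mem (Finset.mem_insert_self _ _)
  have hm2 : (⟨n-2, by omega⟩ : Fin n) ∈ S :=
    Finset.mem_insert_of_mem (Finset.mem_insert_of_mem (Finset.mem_insert_self _ _))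
  have hm3 : (⟨n-1, by omega⟩ : Fin n) ∈ S :=
    Finset.mem_insert_of_mem (Finset.mem_insert_of_mem
      (Finset.mem_insert_of_mem (Finset.mem_singleton_self _)))
  rcases Finset.mem_insert.mp hxS with hx0 | hrest
  · -- x = e0 : pos e0 directed
    rcases hpa : pos ⟨0, by omega⟩ with _ | a
    · exact absurd (hx0 ▸ hpa) hxne
    · apply win_left hn hlegal (Or.inl hpa)
      · exact hothers _ hm2 (by rw [hx0]; exact Fin.ne_of_val_ne (show n-2 ≠ 0 by omega))
      · exact hothers _ hm3 (by rw [hx0]; exact Fin.ne_of_val_ne (show n-1 ≠ 0 by omega))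
  rcases Finset.mem_insert.mp hrest with hx1 | hrest2
  · -- x = e1
    rcases hpa : pos ⟨1, by omega⟩ with _ | a
    · exact absurd (hx1 ▸ hpa) hxne
    · have h0n : pos ⟨0, by omega⟩ = none :=
        hothers _ hm0 (by rw [hx1]; exact Fin.ne_of_val_ne (show (0:ℕ) ≠ 1 by omega))
      apply win_left hn hlegal (Or.inr ⟨h0n, hpa⟩)
      · exact hothers _ hm2 (by rw [hx1]; exact Fin.ne_of_val_ne (show n-2 ≠ 1 by omega))
      · exact hothers _ hm3 (by rw [hx1]; exact Fin.ne_of_val_ne (show n-1 ≠ 1 by omega))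
  rcases Finset.mem_insert.mp hrest2 with hx2 | hx3
  · -- x = e2 (index n-2)
    rcases hpb : pos ⟨n-2, by omega⟩ with _ | b
    · exact absurd (hx2 ▸ hpb) hxne
    · have h3n : pos ⟨n-1, by omega⟩ = none :=
        hothers _ hm3 (by rw [hx2]; exact Fin.ne_of_val_ne (show n-1 ≠ n-2 by omega))
      apply win_right hn hlegal (Or.inr ⟨h3n, hpb⟩)
      · exact hothers _ hm0 (by rw [hx2]; exact Fin.ne_of_val_ne (show (0:ℕ) ≠ n-2 by omega))
      · exact hothers _ hm1 (by rw [hx2]; exact Fin.ne_of_val_ne (show (1:ℕ) ≠ n-2 by omega))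
  · -- x = e3 (index n-1)
    have hx3' := Finset.mem_singleton.mp hx3
    rcases hpb : pos ⟨n-1, by omega⟩ with _ | b
    · exact absurd (hx3' ▸ hpb) hxne
    · apply win_right hn hlegal (Or.inl hpb)
      · exact hothers _ hm0 (by rw [hx3']; exact Fin.ne_of_val_ne (show (0:ℕ) ≠ n-1 by omega))
      · exact hothers _ hm1 (by rw [hx3']; exact Fin.ne_of_val_ne (show (1:ℕ) ≠ n-1 by omega))
end
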